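/- Let J : ℝ^d → ℝ be twice continuously differentiable with a·I ≼ ∇²J(θ) ≼ b·I for all θ, where 0 < a ≤ b, and let F be a symmetric d×d matrix with a·I ≼ F ≼ b·I. Fix θ ∈ ℝ^d, set g = ∇J(θ), Δθ = F⁻¹g, and λ(θ)² = gᵀ F⁻¹ g. Then for every step size η ≥ 0, J(θ − η·Δθ) ≤ J(θ) − η·λ(θ)² + (b/(2a))·η²·λ(θ)². -/

import Mathlib

/-!
Restricted to the line `t ↦ x + t w`, the bound `∇²J ≼ b·I` bounds the second derivative by
`b‖w‖²`, and integrating twice gives `J (x + w) ≤ J x + ⟪∇J x, w⟫ + (b/2)‖w‖²`. For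
`w = -η Δθ` the linear term is `-η ⟪g, F⁻¹ g⟫ = -η λ²`, while `F ≽ a·I` gives
`λ² = ⟪F Δθ, Δθ⟫ ≥ a‖Δθ‖²`, so the quadratic term is at most `(b/(2a)) η² λ²`.
-/

open scoped RealInnerProductSpace

lemma le_of_hasDerivAt_le_of_nonneg {f g f' g' : ℝ → ℝ}
    (hf : ∀ t, HasDerivAt f (f' t) t) (hg : ∀ t, HasDerivAt g (g' t) t)
    (h₀ : f 0 ≤ g 0) (hle : ∀ t, 0 ≤ t → f' t ≤ g' t) {t : ℝ} (ht : 0 ≤ t) : f t ≤ g t :=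
  image_le_of_deriv_right_le_deriv_boundary
    (fun s _ => (hf s).continuousAt.continuousWithinAt) (fun s _ => (hf s).hasDerivWithinAt) h₀
    (fun s _ => (hg s).continuousAt.continuousWithinAt) (fun s _ => (hg s).hasDerivWithinAt)
    (fun s hs => hle s hs.1) ⟨ht, le_rfl⟩

lemma le_add_mul_add_sq_of_hasDerivAt_le {f f' f'' : ℝ → ℝ} {M : ℝ}
    (hf : ∀ t, HasDerivAt f (f' t) t) (hf' : ∀ t, HasDerivAt f' (f'' t) t)
    (hM : ∀ t, f'' t ≤ M) {t : ℝ} (ht : 0 ≤ t) :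
    f t ≤ f 0 + f' 0 * t + M / 2 * t ^ 2 := by
  have hslope : ∀ s, 0 ≤ s → f' s ≤ f' 0 + M * s := fun s hs =>
    le_of_hasDerivAt_le_of_nonneg hf'
      (fun s => ((hasDerivAt_id s).const_mul M).const_add (f' 0)) (by simp)
      (fun s _ => by simpa using hM s) hs
  have hmodel : ∀ s, HasDerivAt (fun s => f 0 + f' 0 * s + M / 2 * s ^ 2) (f' 0 + M * s) s :=
    fun s => ((((hasDerivAt_id' s).const_mul (f' 0)).const_add (f 0)).add
      ((hasDerivAt_pow 2 s).const_mul (M / 2))).congr_deriv (by push_cast; ring)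
  exact le_of_hasDerivAt_le_of_nonneg hf hmodel (by simp) hslope ht

section InnerProductSpace

variable {E : Type*} [NormedAddCommGroup E] [InnerProductSpace ℝ E] [CompleteSpace E]

lemma ContDiff.differentiable_gradient {J : E → ℝ} {n : WithTop ℕ∞} (hJ : ContDiff ℝ n J)
    (hn : 2 ≤ n) : Differentiable ℝ (gradient J) :=
  (InnerProductSpace.toDual ℝ E).symm.differentiable.comp
    ((hJ.fderiv_right (m := 1) hn).differentiable one_ne_zero)

theorem le_add_inner_gradient_add_of_inner_fderiv_gradient_le {J : E → ℝ} {b : ℝ}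
    (hJ : Differentiable ℝ J) (hgrad : Differentiable ℝ (gradient J))
    (hb : ∀ y v, ⟪fderiv ℝ (gradient J) y v, v⟫ ≤ b * ‖v‖ ^ 2) (x w : E) :
    J (x + w) ≤ J x + ⟪gradient J x, w⟫ + b / 2 * ‖w‖ ^ 2 := by
  have hline : ∀ t : ℝ, HasDerivAt (fun s : ℝ => x + s • w) w t := fun t => by
    simpa using ((hasDerivAt_id t).smul_const w).const_add x
  have hJ' : ∀ t : ℝ,
      HasDerivAt (fun s => J (x + s • w)) ⟪gradient J (x + t • w), w⟫ t := fun t => by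
    have := (hJ _).hasGradientAt.hasFDerivAt.comp_hasDerivAt t (hline t)
    rwa [InnerProductSpace.toDual_apply_apply] at this
  have hJ'' : ∀ t : ℝ, HasDerivAt (fun s => ⟪gradient J (x + s • w), w⟫)
      ⟪fderiv ℝ (gradient J) (x + t • w) w, w⟫ t := fun t => by
    simpa using ((hgrad _).hasFDerivAt.comp_hasDerivAt t (hline t)).inner ℝ
      (hasDerivAt_const t w)
  simpa [mul_div_right_comm] using
    le_add_mul_add_sq_of_hasDerivAt_le hJ' hJ'' (fun t => hb _ w) zero_le_one

end InnerProductSpace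

section Matrix

variable {n : Type*} [Fintype n] [DecidableEq n]

lemma Matrix.PosSemidef.mul_norm_sq_le_inner_toEuclideanLin {F : Matrix n n ℝ} {a : ℝ}
    (hF : (F - a • 1).PosSemidef) (v : EuclideanSpace ℝ n) :
    a * ‖v‖ ^ 2 ≤ ⟪F.toEuclideanLin v, v⟫ := by
  have := (Matrix.isPositive_toEuclideanLin_iff.mpr hF).inner_nonneg_left v
  rw [map_sub, map_smul, Matrix.toLpLin_one, LinearMap.sub_apply, inner_sub_left,
    LinearMap.smul_apply, LinearMap.id_apply, real_inner_smul_left,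
    real_inner_self_eq_norm_sq] at this
  linarith

lemma Matrix.PosSemidef.mul_norm_sq_le_inner_toEuclideanLin_inv {F : Matrix n n ℝ} {a : ℝ}
    (ha : 0 < a) (hF : (F - a • 1).PosSemidef) (g : EuclideanSpace ℝ n) :
    a * ‖F⁻¹.toEuclideanLin g‖ ^ 2 ≤ ⟪g, F⁻¹.toEuclideanLin g⟫ := by
  have hFpos : F.PosDef := by
    simpa using Matrix.PosDef.posSemidef_add hF (Matrix.PosDef.one.smul ha)
  have hFinv : F.toEuclideanLin (F⁻¹.toEuclideanLin g) = g := by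
    rw [← LinearMap.comp_apply, ← Matrix.toLpLin_mul_same,
      Matrix.mul_nonsing_inv F ((Matrix.isUnit_iff_isUnit_det F).mp hFpos.isUnit),
      Matrix.toLpLin_one, LinearMap.id_apply]
  calc a * ‖F⁻¹.toEuclideanLin g‖ ^ 2
      ≤ ⟪F.toEuclideanLin (F⁻¹.toEuclideanLin g), F⁻¹.toEuclideanLin g⟫ :=
        hF.mul_norm_sq_le_inner_toEuclideanLin _
    _ = ⟪g, F⁻¹.toEuclideanLin g⟫ := by rw [hFinv]

end Matrix

theorem stmt_1_general (d : ℕ) (J : EuclideanSpace ℝ (Fin d) → ℝ) (a b : ℝ)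
    (ha : 0 < a) (hab : a ≤ b)
    (hJ : ContDiff ℝ 2 J)
    (hHess : ∀ θ v : EuclideanSpace ℝ (Fin d),
      a * ‖v‖ ^ 2 ≤ ⟪fderiv ℝ (gradient J) θ v, v⟫ ∧
        ⟪fderiv ℝ (gradient J) θ v, v⟫ ≤ b * ‖v‖ ^ 2)
    (F : Matrix (Fin d) (Fin d) ℝ)
    (hFa : (F - a • (1 : Matrix (Fin d) (Fin d) ℝ)).PosSemidef)
    (θ g Δθ : EuclideanSpace ℝ (Fin d)) (lamsq : ℝ)
    (hg : g = gradient J θ)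
    (hΔθ : Δθ = Matrix.toEuclideanLin F⁻¹ g)
    (hlamsq : lamsq = ⟪g, Matrix.toEuclideanLin F⁻¹ g⟫) :
    ∀ η : ℝ, 0 ≤ η →
      J (θ - η • Δθ) ≤ J θ - η * lamsq + (b / (2 * a)) * η ^ 2 * lamsq := by
  intro η _
  have hdecrement : a * ‖Δθ‖ ^ 2 ≤ lamsq :=
    hΔθ ▸ hlamsq ▸ hFa.mul_norm_sq_le_inner_toEuclideanLin_inv ha g
  have hlinear : ⟪gradient J θ, Δθ⟫ = lamsq := by rw [← hg, hΔθ, hlamsq]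
  have hdescent := le_add_inner_gradient_add_of_inner_fderiv_gradient_le
    (hJ.differentiable (by norm_num)) (hJ.differentiable_gradient le_rfl)
    (fun y v => (hHess y v).2) θ (-(η • Δθ))
  rw [← sub_eq_add_neg, inner_neg_right, real_inner_smul_right, hlinear,
    norm_neg, norm_smul, mul_pow, Real.norm_eq_abs, sq_abs] at hdescent
  have hb : 0 ≤ b := ha.le.trans hab
  have hquadratic : b / 2 * (η ^ 2 * ‖Δθ‖ ^ 2) ≤ b / (2 * a) * η ^ 2 * lamsq :=
    calc b / 2 * (η ^ 2 * ‖Δθ‖ ^ 2) = b / (2 * a) * η ^ 2 * (a * ‖Δθ‖ ^ 2) := by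
          field_simp
      _ ≤ b / (2 * a) * η ^ 2 * lamsq := by gcongr
  linarith

/-- Key intermediate inequality: for any step size `η ≥ 0`,
`J(θ − η Δθ) ≤ J(θ) − η λ(θ)² + (b/(2a)) η² λ(θ)²`, where `Δθ = F⁻¹ g` is the
preconditioned direction and `λ(θ)² = gᵀ F⁻¹ g` the Newton decrement. -/
theorem stmt_1 (d : ℕ) (J : EuclideanSpace ℝ (Fin d) → ℝ) (a b : ℝ)
    (ha : 0 < a) (hab : a ≤ b)
    (hJ : ContDiff ℝ 2 J)
    (hHess : ∀ θ v : EuclideanSpace ℝ (Fin d),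
      a * ‖v‖ ^ 2 ≤ ⟪fderiv ℝ (gradient J) θ v, v⟫ ∧
        ⟪fderiv ℝ (gradient J) θ v, v⟫ ≤ b * ‖v‖ ^ 2)
    (F : Matrix (Fin d) (Fin d) ℝ) (hFsymm : F.IsSymm)
    (hFa : (F - a • (1 : Matrix (Fin d) (Fin d) ℝ)).PosSemidef)
    (hFb : ((b • (1 : Matrix (Fin d) (Fin d) ℝ)) - F).PosSemidef)
    (θ g Δθ : EuclideanSpace ℝ (Fin d)) (lamsq : ℝ)
    (hg : g = gradient J θ)
    (hΔθ : Δθ = Matrix.toEuclideanLin F⁻¹ g)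
    (hlamsq : lamsq = ⟪g, Matrix.toEuclideanLin F⁻¹ g⟫) :
    ∀ η : ℝ, 0 ≤ η →
      J (θ - η • Δθ) ≤ J θ - η * lamsq + (b / (2 * a)) * η ^ 2 * lamsq :=
  stmt_1_general d J a b ha hab hJ hHess F hFa θ g Δθ lamsq hg hΔθ hlamsq
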